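/- The derivatives at z = 1 of the diagonal Green functions are uniformly bounded: sup_{x∈V} G′(x,x|1) < ∞, where G′(x,x|1) = Σ_{n≥1} n·p^{(n)}(x,x) is the derivative of z ↦ G(x,x|z) at z = 1. -/

import Mathlib

open MeasureTheory Filter
open scoped ENNReal NNReal Classical

/-- Setup for a free product of two graphs `V₁ ∗ V₂`: two disjoint countable vertex
sets with roots, each with at least two elements, transition matrices whose rows sum
to one, every vertex reachable from the root, a uniform positive lower bound `ε₀` on
the positive entries, and a mixing parameter `α ∈ (0,1)`. -/
structure Setup (V₁ : Type) (V₂ : Type) [Countable V₁] [Countable V₂]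
    [DecidableEq V₁] [DecidableEq V₂] where
  o₁ : V₁
  o₂ : V₂
  nontrivial₁ : ∃ x : V₁, x ≠ o₁
  nontrivial₂ : ∃ x : V₂, x ≠ o₂
  p₁ : V₁ → V₁ → ℝ
  p₂ : V₂ → V₂ → ℝ
  p₁_nonneg : ∀ x y, 0 ≤ p₁ x y
  p₂_nonneg : ∀ x y, 0 ≤ p₂ x y
  p₁_rowSum : ∀ x, HasSum (p₁ x) 1
  p₂_rowSum : ∀ x, HasSum (p₂ x) 1
  /-- every vertex of `V₁` is reachable from the root `o₁` with positive probability -/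
  acc₁ : ∀ x : V₁, ∃ l : List V₁, List.Chain (fun u v => 0 < p₁ u v) o₁ l ∧
    (o₁ :: l).getLast (List.cons_ne_nil _ _) = x
  acc₂ : ∀ x : V₂, ∃ l : List V₂, List.Chain (fun u v => 0 < p₂ u v) o₂ l ∧
    (o₂ :: l).getLast (List.cons_ne_nil _ _) = x
  ε₀ : ℝ
  ε₀_pos : 0 < ε₀
  ε₀_le₁ : ∀ x y, 0 < p₁ x y → ε₀ ≤ p₁ x y
  ε₀_le₂ : ∀ x y, 0 < p₂ x y → ε₀ ≤ p₂ x y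
  α : ℝ
  α_pos : 0 < α
  α_lt_one : α < 1

namespace Setup

variable {V₁ V₂ : Type} [Countable V₁] [Countable V₂] [DecidableEq V₁] [DecidableEq V₂]
variable (S : Setup V₁ V₂)

/-- A letter of the free product: an element of `V₁^× = V₁ ∖ {o₁}` or of `V₂^× = V₂ ∖ {o₂}`. -/
def Letter : Type := {x : V₁ // x ≠ S.o₁} ⊕ {x : V₂ // x ≠ S.o₂}

instance : DecidableEq S.Letter :=
  inferInstanceAs (DecidableEq ({x : V₁ // x ≠ S.o₁} ⊕ {x : V₂ // x ≠ S.o₂}))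
instance : Countable S.Letter :=
  inferInstanceAs (Countable ({x : V₁ // x ≠ S.o₁} ⊕ {x : V₂ // x ≠ S.o₂}))

/-- the factor a letter belongs to: `true` for `V₁^×`, `false` for `V₂^×`. -/
def ltype : S.Letter → Bool := Sum.elim (fun _ => true) (fun _ => false)

/-- An element of the free product `V = V₁ ∗ V₂`: a finite word over the alphabet
`V₁^× ∪ V₂^×` in which no two consecutive letters lie in the same factor. -/
def Word : Type := {l : List S.Letter // l.Chain' fun a b => S.ltype a ≠ S.ltype b}

instance : DecidableEq S.Word :=
  inferInstanceAs (DecidableEq {l : List S.Letter // l.Chain' fun a b => S.ltype a ≠ S.ltype b})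
instance : Countable S.Word :=
  inferInstanceAs (Countable {l : List S.Letter // l.Chain' fun a b => S.ltype a ≠ S.ltype b})
instance : MeasurableSpace S.Word := ⊤

/-- the empty word `o`. -/
def emp : S.Word := ⟨[], List.isChain_nil⟩

/-- word length `‖u‖`. -/
def wlen (u : S.Word) : ℕ := u.val.length

/-- the last letter `[u]` of a word (`none` for the empty word). -/
def lastLetter (u : S.Word) : Option S.Letter := u.val.getLast?

/-- the type `τ(u)` of a word: the factor of its last letter (`none` for `o`). -/
def wtype (u : S.Word) : Option Bool := (u.val.getLast?).map S.ltype

/-- the factor of the first letter of a word (`none` for `o`). -/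
def firstType (u : S.Word) : Option Bool := (u.val.head?).map S.ltype

/-- the cone `C(x)`: all words having `x` as a prefix. -/
def cone (x : S.Word) : Set S.Word := {y | x.val <+: y.val}

/-- the one-letter word determined by a letter. -/
def single (g : S.Letter) : S.Word := ⟨[g], List.isChain_singleton g⟩

/-- the word `u` with its last letter removed in case that letter lies in factor `i`
(so `u = (stripLast i u)·v` with `v ∈ Vᵢ`). -/
def stripLast (i : Bool) (u : S.Word) : List S.Letter :=
  if (u.val.getLast?).map S.ltype = some i then u.val.dropLast else u.val

/-- the `V₁`-component of the last letter of `u` (`o₁` if the last letter is not in `V₁^×`). -/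
def lastIn₁ (u : S.Word) : V₁ :=
  ((u.val.getLast?).map (Sum.elim Subtype.val fun _ => S.o₁)).getD S.o₁

/-- the `V₂`-component of the last letter of `u` (`o₂` if the last letter is not in `V₂^×`). -/
def lastIn₂ (u : S.Word) : V₂ :=
  ((u.val.getLast?).map (Sum.elim (fun _ => S.o₂) Subtype.val)).getD S.o₂

/-- the lift `p̄₁` of `P₁` to the free product: `p̄₁(xv,xw) = p₁(v,w)` for `v,w ∈ V₁`. -/
def pbar₁ (u w : S.Word) : ℝ :=
  if S.stripLast true u = S.stripLast true w then S.p₁ (S.lastIn₁ u) (S.lastIn₁ w) else 0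

/-- the lift `p̄₂` of `P₂` to the free product. -/
def pbar₂ (u w : S.Word) : ℝ :=
  if S.stripLast false u = S.stripLast false w then S.p₂ (S.lastIn₂ u) (S.lastIn₂ w) else 0

/-- the single-step transition probabilities `P = α·P̄₁ + (1−α)·P̄₂` of the random walk. -/
def step (u w : S.Word) : ℝ := S.α * S.pbar₁ u w + (1 - S.α) * S.pbar₂ u w

/-- single-step transition probabilities, as extended nonnegative reals. -/
noncomputable def stepE (u w : S.Word) : ℝ≥0∞ := ENNReal.ofReal (S.step u w)

/-- the `n`-step transition probabilities `p^{(n)}(x,y)`. -/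
noncomputable def pn : ℕ → S.Word → S.Word → ℝ≥0∞
  | 0, u, w => if u = w then 1 else 0
  | n + 1, u, w => ∑' v : S.Word, pn n u v * S.stepE v w

/-- `G′(x,x|1) = Σ_{n≥1} n·p^{(n)}(x,x)`, the derivative at `z = 1` of the Green
function `G(x,x|z)`. -/
noncomputable def Gderiv (x : S.Word) : ℝ≥0∞ := ∑' n : ℕ, (n : ℝ≥0∞) * S.pn n x x

/-- the assumption that all Green functions `G(x,y|z) = Σ p^{(n)}(x,y) zⁿ` have radius
of convergence at least `R` for some `R > 1`. -/
def GreenRadiusGT1 : Prop :=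
  ∃ R : ℝ≥0, 1 < R ∧ ∀ x y : S.Word, ∀ r : ℝ≥0, r < R →
    (∑' n : ℕ, S.pn n x y * (r : ℝ≥0∞) ^ n) ≠ ⊤

/-- `fvisit n y x` is the probability, starting at `y`, that the first visit to `x`
occurs exactly at time `n`. -/
noncomputable def fvisit : ℕ → S.Word → S.Word → ℝ≥0∞
  | 0, y, x => if y = x then 1 else 0
  | n + 1, y, x => if y = x then 0 else ∑' z : S.Word, S.stepE y z * fvisit n z x

/-- `U(x,x)`: the probability of returning to `x` when starting at `x`. -/
noncomputable def Uret (x : S.Word) : ℝ≥0∞ :=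
  ∑' n : ℕ, ∑' z : S.Word, S.stepE x z * S.fvisit n z x

/-- the exit times: `e₀ = 0` and `e_k = inf{m > e_{k−1} : ‖Xₙ‖ ≥ k for all n ≥ m}`
(`0` by convention if no such time exists). -/
noncomputable def eT : ℕ → (ℕ → S.Word) → ℕ
  | 0, _ => 0
  | k + 1, ω => sInf {m | eT k ω < m ∧ ∀ n ≥ m, k + 1 ≤ S.wlen (ω n)}

/-- `W_k = [X_{e_k}]`, the `k`-th stabilized letter. -/
noncomputable def Wlast (k : ℕ) (ω : ℕ → S.Word) : Option S.Letter :=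
  S.lastLetter (ω (S.eT k ω))

/-- the set of vertices visited up to time `n`. -/
def visited (n : ℕ) (ω : ℕ → S.Word) : Set S.Word := {x | ∃ j ≤ n, ω j = x}

/-- the shift `x⁻¹A` deleting the prefix `x` from each element of `A ⊆ C(x)`. -/
def wshift (x : S.Word) (A : Set S.Word) : Set S.Word := {y | ∃ a ∈ A, a.val = x.val ++ y.val}

/-- (the support of) `ψ_k`: for `k ≥ 2` the set obtained from
`{X₀,…,X_{e_k}} ∩ C(X_{e_{k−1}})` by deleting the prefix `X_{e_{k−1}}`; for `k = 1`
the set `{X₀,…,X_{e₁}} ∩ V*_{τ(X_{e₁})}`. -/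
noncomputable def psi (k : ℕ) (ω : ℕ → S.Word) : Set S.Word :=
  if k = 1 then
    {x | x ∈ S.visited (S.eT 1 ω) ω ∧ (x = S.emp ∨ S.firstType x = S.wtype (ω (S.eT 1 ω)))}
  else
    S.wshift (ω (S.eT (k - 1) ω)) (S.visited (S.eT k ω) ω ∩ S.cone (ω (S.eT (k - 1) ω)))

/-- the range `Rₙ = |{X₀,…,Xₙ}|`. -/
noncomputable def rangeCount (n : ℕ) (ω : ℕ → S.Word) : ℕ :=
  ((Finset.range (n + 1)).image ω).card

/-- the maximal exit time index `k(n) = max{k : e_k ≤ n}`. -/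
noncomputable def kmax (n : ℕ) (ω : ℕ → S.Word) : ℕ := sSup {k | S.eT k ω ≤ n}

end Setup

/-- A family of Markov measures for the random walk on the free product:
`P x` is the law of the walk started at `x`, so that the probability of any cylinder
`[X₀ = w₀, …, Xₙ = wₙ]` equals `δ_x(w₀)·∏ p(wᵢ, wᵢ₊₁)`. -/
structure RW {V₁ V₂ : Type} [Countable V₁] [Countable V₂] [DecidableEq V₁] [DecidableEq V₂]
    (S : Setup V₁ V₂) where
  P : S.Word → Measure (ℕ → S.Word)
  prob : ∀ x, IsProbabilityMeasure (P x)
  cyl : ∀ (x : S.Word) (n : ℕ) (w : Fin (n + 1) → S.Word),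
    P x {ω | ∀ i : Fin (n + 1), ω (i : ℕ) = w i} =
      (if w 0 = x then 1 else 0) * ∏ i : Fin n, S.stepE (w i.castSucc) (w i.succ)

namespace Setup

variable {V₁ V₂ : Type} [Countable V₁] [Countable V₂] [DecidableEq V₁] [DecidableEq V₂]
variable (S : Setup V₁ V₂)

/-- `ξᵢ = P[∃ n ≥ 1 : Xₙ ∈ Vᵢ^×]` (for the walk started at `o`). -/
noncomputable def xi (X : RW S) (i : Bool) : ℝ≥0∞ :=
  X.P S.emp {ω | ∃ n, 1 ≤ n ∧ S.wlen (ω n) = 1 ∧ S.wtype (ω n) = some i}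

/-- `D_k`, the support of `(W_k, ψ_k)`. -/
noncomputable def Dsupp (X : RW S) (k : ℕ) : Set (S.Letter × Set S.Word) :=
  {gf | 0 < X.P S.emp {ω | S.Wlast k ω = some gf.1 ∧ S.psi k ω = gf.2}}

/-- the event `[(W₁,ψ₁) = s₁, …, (W_k,ψ_k) = s_k]`. -/
noncomputable def histEvent (k : ℕ) (s : ℕ → S.Letter × Set S.Word) : Set (ℕ → S.Word) :=
  {ω | ∀ j, 1 ≤ j → j ≤ k → S.Wlast j ω = some (s j).1 ∧ S.psi j ω = (s j).2}

/-- `q` is a (homogeneous) transition kernel for the process `(W_k, ψ_k)_{k≥1}`: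
the conditional probability of the next state given the whole history depends only on
the current and the next state, via `q`. -/
def IsExitKernel (X : RW S) (q : S.Letter × Set S.Word → S.Letter × Set S.Word → ℝ≥0∞) : Prop :=
  ∀ k, 1 ≤ k → ∀ s : ℕ → S.Letter × Set S.Word,
    0 < X.P S.emp (S.histEvent k s) →
    X.P S.emp (S.histEvent (k + 1) s) = X.P S.emp (S.histEvent k s) * q (s k) (s (k + 1))

/-- `R̃₁` as a function of the state `(g,f)`: `|supp f ∖ C(g)|`. -/
noncomputable def RtilFun (gf : S.Letter × Set S.Word) : ℝ≥0∞ :=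
  ((gf.2 \ S.cone (S.single gf.1)).encard : ℝ≥0∞)

/-- `O₁` as a function of the state `(g,f)`: `|supp f ∩ C(g)|`. -/
noncomputable def OverFun (gf : S.Letter × Set S.Word) : ℝ≥0∞ :=
  ((gf.2 ∩ S.cone (S.single gf.1)).encard : ℝ≥0∞)

/-- cone of an optional letter. -/
def coneOpt : Option S.Letter → Set S.Word
  | some g => S.cone (S.single g)
  | none => ∅

/-- the overhead `O_k = |supp(ψ_k) ∩ C(W_k)|`. -/
noncomputable def Ocount (k : ℕ) (ω : ℕ → S.Word) : ℝ≥0∞ :=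
  ((S.psi k ω ∩ S.coneOpt (S.Wlast k ω)).encard : ℝ≥0∞)

/-- `|supp(ψ_k)|`. -/
noncomputable def psiCount (k : ℕ) (ω : ℕ → S.Word) : ℝ≥0∞ :=
  ((S.psi k ω).encard : ℝ≥0∞)

end Setup

/-- `n`-step transition powers of a kernel `q` on a countable state space. -/
noncomputable def kpow {σ : Type} (q : σ → σ → ℝ≥0∞) : ℕ → σ → σ → ℝ≥0∞
  | 0, s, t => if s = t then 1 else 0
  | n + 1, s, t => ∑' u : σ, kpow q n s u * q u t

/-- `π` is an invariant (stationary) probability measure, supported on `D`, of the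
chain with transition kernel `q`. -/
def IsStationaryKernel {σ : Type} (q : σ → σ → ℝ≥0∞) (D : Set σ) (π : σ → ℝ≥0∞) : Prop :=
  (∑' s : σ, π s) = 1 ∧ (∀ s, s ∉ D → π s = 0) ∧ ∀ t, (∑' s : σ, π s * q s t) = π t

/-! Return probabilities are supermultiplicative, `p⁽ᵐ⁺ⁿ⁾(x,x) ≥ p⁽ᵐ⁾(x,x) p⁽ⁿ⁾(x,x)`. Hence if
`p⁽ⁿ⁾(x,x) rⁿ > 1` for some `n`, the terms `p⁽ᵏⁿ⁾(x,x) rᵏⁿ ≥ (p⁽ⁿ⁾(x,x) rⁿ)ᵏ` blow up and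
`G(x,x|r) = ∞`. So for `1 < r < R` we get `p⁽ⁿ⁾(x,x) ≤ r⁻ⁿ` uniformly in `x`, and
`G′(x,x|1) ≤ Σ n r⁻ⁿ < ∞`. -/

theorem ENNReal.le_one_of_mul_le_of_tsum_ne_top {a : ℕ → ℝ≥0∞}
    (hmul : ∀ m n, a m * a n ≤ a (m + n)) (hsum : ∑' n, a n ≠ ∞) (n : ℕ) : a n ≤ 1 := by
  have hpow : ∀ k, a n ^ (k + 1) ≤ a ((k + 1) * n) := by
    intro k
    induction k with
    | zero => simp
    | succ k ih =>
      calc a n ^ (k + 2) = a n ^ (k + 1) * a n := pow_succ _ _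
        _ ≤ a ((k + 1) * n) * a n := mul_le_mul_left ih _
        _ ≤ a ((k + 2) * n) := by convert hmul _ _ using 2; ring
  by_contra! h
  have htends : Tendsto (fun k => a n ^ (k + 1)) atTop (nhds ∞) :=
    (tendsto_add_atTop_iff_nat 1).2 (ENNReal.tendsto_pow_atTop_nhds_top_iff.2 h)
  obtain ⟨k, hk⟩ := (htends.eventually (lt_mem_nhds hsum.lt_top)).exists
  exact (hk.trans_le ((hpow k).trans (ENNReal.le_tsum _))).false

theorem ENNReal.tsum_natCast_mul_pow_ne_top {t : ℝ≥0∞} (ht : t < 1) :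
    ∑' n : ℕ, (n : ℝ≥0∞) * t ^ n ≠ ∞ := by
  lift t to ℝ≥0 using ht.ne_top
  have : Summable fun n : ℕ => (n : ℝ≥0) * t ^ n := by
    rw [← NNReal.summable_coe]
    simpa using summable_pow_mul_geometric_of_norm_lt_one 1 (r := (t : ℝ)) (by simpa using ht)
  simpa using ENNReal.tsum_coe_ne_top_iff_summable.2 this

section KernelPowers

variable {σ : Type} (q : σ → σ → ℝ≥0∞)

theorem kpow_add (m n : ℕ) (s t : σ) :
    kpow q (m + n) s t = ∑' u, kpow q m s u * kpow q n u t := by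
  induction n generalizing t with
  | zero => simp [kpow, tsum_ite_eq]
  | succ n ih =>
    calc kpow q (m + n + 1) s t
        = ∑' v, (∑' u, kpow q m s u * kpow q n u v) * q v t := by simp only [kpow, ih]
      _ = ∑' u, kpow q m s u * ∑' v, kpow q n u v * q v t := by
        simp only [← ENNReal.tsum_mul_right, ← ENNReal.tsum_mul_left, mul_assoc]
        exact ENNReal.tsum_comm
      _ = ∑' u, kpow q m s u * kpow q (n + 1) u t := rfl

theorem kpow_mul_kpow_le_kpow_add (m n : ℕ) (s : σ) :
    kpow q m s s * kpow q n s s ≤ kpow q (m + n) s s :=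
  (kpow_add q m n s s).symm ▸ ENNReal.le_tsum (f := fun u => kpow q m s u * kpow q n u s) s

theorem kpow_le_inv_pow {s : σ} {r : ℝ≥0∞} (hr : ∑' n, kpow q n s s * r ^ n ≠ ∞) (n : ℕ) :
    kpow q n s s ≤ r⁻¹ ^ n := by
  rw [← ENNReal.inv_pow, ENNReal.le_inv_iff_mul_le]
  refine ENNReal.le_one_of_mul_le_of_tsum_ne_top (fun m n => ?_) hr n
  calc kpow q m s s * r ^ m * (kpow q n s s * r ^ n)
      = kpow q m s s * kpow q n s s * r ^ (m + n) := by ring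
    _ ≤ kpow q (m + n) s s * r ^ (m + n) := by gcongr; exact kpow_mul_kpow_le_kpow_add q m n s

end KernelPowers

theorem Setup.pn_eq_kpow {V₁ V₂ : Type} [Countable V₁] [Countable V₂] [DecidableEq V₁]
    [DecidableEq V₂] (S : Setup V₁ V₂) (n : ℕ) : S.pn n = kpow S.stepE n := by
  induction n with
  -- the two `if`s differ only in their `Decidable` instances
  | zero => funext u w; simp only [Setup.pn, kpow]; congr
  | succ n ih => funext u w; simp only [Setup.pn, kpow, ih]

/-- `sup_{x∈V} G′(x,x|1) < ∞`, where
`G′(x,x|1) = Σ_{n≥1} n·p^{(n)}(x,x)`. -/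
theorem sup_Green_deriv_finite
    {V₁ V₂ : Type} [Countable V₁] [Countable V₂] [DecidableEq V₁] [DecidableEq V₂]
    (S : Setup V₁ V₂) (hG : S.GreenRadiusGT1) :
    (⨆ x : S.Word, S.Gderiv x) < ⊤ := by
  obtain ⟨R, hR, hGreen⟩ := hG
  obtain ⟨r, hr1, hrR⟩ := exists_between hR
  have hbound : ∀ x, S.Gderiv x ≤ ∑' n : ℕ, (n : ℝ≥0∞) * (r : ℝ≥0∞)⁻¹ ^ n := by
    intro x
    have hx := hGreen x x r hrR
    simp only [Setup.Gderiv, S.pn_eq_kpow] at hx ⊢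
    exact ENNReal.tsum_le_tsum fun n => mul_le_mul_right (kpow_le_inv_pow S.stepE hx n) _
  exact (iSup_le hbound).trans_lt
    (ENNReal.tsum_natCast_mul_pow_ne_top (ENNReal.inv_lt_one.2 (by exact_mod_cast hr1))).lt_top
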